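/- arXiv:1408.4828 — 9 statements merged into one kernel-verified Lean document; each statement's English description precedes it below -/
import Mathlib

section
/- For any positive integer N, the set {(p,q) ∈ ℤ² : gcd(p,q) ≤ N} is not relatively dense in ℝ², i.e., for every R > 0 there exists a point x ∈ ℝ² such that the closed ball of radius R around x contains no point (p,q) ∈ ℤ² with gcd(p,q) ≤ N. -/
/-- The point `(a, b)` in the Euclidean plane. -/
noncomputable def pt (a b : ℝ) : EuclideanSpace ℝ (Fin 2) :=
  (WithLp.equiv 2 (Fin 2 → ℝ)).symm ![a, b]

/-- Chinese remainder theorem over a finite set of pairwise coprime moduli. -/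
lemma exists_int_crt {ι : Type*} (s : Finset ι) (n : ι → ℕ)
    (hcop : ∀ i ∈ s, ∀ j ∈ s, i ≠ j → Nat.Coprime (n i) (n j)) (r : ι → ℤ) :
    ∃ a : ℤ, ∀ i ∈ s, (n i : ℤ) ∣ a - r i := by
  classical
  induction s using Finset.induction with
  | empty => exact ⟨0, by simp⟩
  | @insert j s hj ih =>
    obtain ⟨a, ha⟩ := ih (fun i hi k hk => hcop i (Finset.mem_insert_of_mem hi) k
      (Finset.mem_insert_of_mem hk))
    have hcj : IsCoprime (n j : ℤ) (∏ i ∈ s, (n i : ℤ)) := by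
      apply IsCoprime.prod_right
      intro i hi
      exact Nat.isCoprime_iff_coprime.2 <| hcop j (Finset.mem_insert_self _ _) i
        (Finset.mem_insert_of_mem hi) (by rintro rfl; exact hj hi)
    obtain ⟨u, v, huv⟩ := hcj
    set L : ℤ := ∏ i ∈ s, (n i : ℤ) with hL
    refine ⟨r j * v * L + a * u * n j, ?_⟩
    intro i hi
    rcases Finset.mem_insert.1 hi with rfl | hi
    · have key : r i * v * L + a * u * n i - r i = (a - r i) * u * n i := by
        linear_combination r i * huv
      exact key ▸ ⟨(a - r i) * u, by ring⟩
    · have h1 : (n i : ℤ) ∣ (r j * v * L + a * u * n j) - a := by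
        have key : (r j * v * L + a * u * n j) - a = (r j - a) * v * L := by
          linear_combination a * huv
        exact key ▸ Dvd.dvd.mul_left (Finset.dvd_prod_of_mem (fun i => (n i : ℤ)) hi) _
      have := dvd_add h1 (ha i hi)
      simpa using this


/-- Coordinate distance bound in the Euclidean plane. -/
lemma coord_le_dist (x y : EuclideanSpace ℝ (Fin 2)) (i : Fin 2) :
    dist (x i) (y i) ≤ dist x y := by
  rw [EuclideanSpace.dist_eq]
  have h1 : dist (x i) (y i) ^ 2 ≤ ∑ j : Fin 2, dist (x j) (y j) ^ 2 :=
    Finset.single_le_sum (f := fun j => dist (x j) (y j) ^ 2) (fun j _ => sq_nonneg _) (Finset.mem_univ i)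
  calc dist (x i) (y i) = √(dist (x i) (y i) ^ 2) := by
        rw [Real.sqrt_sq dist_nonneg]
    _ ≤ _ := Real.sqrt_le_sqrt h1

lemma pt_apply_zero (a b : ℝ) : pt a b 0 = a := rfl
lemma pt_apply_one (a b : ℝ) : pt a b 1 = b := rfl


/-- For any positive integer `N`, the set `{(p,q) ∈ ℤ² : gcd(p,q) ≤ N}` is not relatively
dense in `ℝ²`: for every `R > 0` there is a point `x ∈ ℝ²` whose closed `R`-ball contains
no integer point with gcd at most `N`. -/
theorem bounded_gcd_not_relatively_dense (N : ℕ) (hN : 0 < N) :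
    ∀ R : ℝ, 0 < R → ∃ x : EuclideanSpace ℝ (Fin 2),
      ∀ p q : ℤ, Int.gcd p q ≤ N →
        (pt (p : ℝ) ((q : ℝ)) : EuclideanSpace ℝ (Fin 2)) ∉ Metric.closedBall x R := by
  intro R hR
  classical
  set M : ℕ := ⌈R⌉₊ with hM
  have hRM : R ≤ (M : ℝ) := Nat.le_ceil R
  -- primes indexed by grid cells
  set P : ℤ × ℤ → ℕ := fun z => Nat.nth Nat.Prime (Encodable.encode z + N + 1) with hPdef
  have hsm : StrictMono (Nat.nth Nat.Prime) := Nat.nth_strictMono Nat.infinite_setOf_prime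
  have hPprime : ∀ z, (P z).Prime := fun z => Nat.prime_nth_prime _
  have hPN : ∀ z, N < P z := fun z =>
    lt_of_lt_of_le (by omega : N < Encodable.encode z + N + 1) hsm.le_apply
  have hPinj : Function.Injective P := by
    intro z w h
    have := hsm.injective h
    exact Encodable.encode_injective (by omega)
  set s : Finset (ℤ × ℤ) :=
    Finset.Icc (-(M : ℤ)) M ×ˢ Finset.Icc (-(M : ℤ)) M with hs
  have hcop : ∀ i ∈ s, ∀ j ∈ s, i ≠ j → Nat.Coprime (P i) (P j) := fun i _ j _ hij =>
    (Nat.coprime_primes (hPprime i) (hPprime j)).2 fun h => hij (hPinj h)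
  obtain ⟨a, ha⟩ := exists_int_crt s P hcop (fun z => -z.1)
  obtain ⟨b, hb⟩ := exists_int_crt s P hcop (fun z => -z.2)
  -- the product of the moduli
  set L : ℤ := ∏ z ∈ s, (P z : ℤ) with hL
  have hL1 : 1 ≤ L := by
    have : 0 < L := by
      rw [hL]
      exact Finset.prod_pos fun z _ => by exact_mod_cast (hPprime z).pos
    omega
  have hdvdL : ∀ z ∈ s, (P z : ℤ) ∣ L := fun z hz => Finset.dvd_prod_of_mem _ hz
  -- shift a to be large
  set A : ℤ := a + L * (|a| + M + 1) with hA
  have hAbig : (M : ℤ) + 1 ≤ A := by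
    have h0 : (0:ℤ) ≤ |a| + M + 1 := by positivity
    nlinarith [abs_nonneg a, neg_abs_le a]
  have hAcong : ∀ z ∈ s, (P z : ℤ) ∣ A + z.1 := by
    intro z hz
    have h1 := ha z hz
    have h2 := hdvdL z hz
    have : A + z.1 = (a - (-z.1)) + L * (|a| + M + 1) := by ring
    rw [this]
    exact dvd_add h1 (h2.mul_right _)
  have hBcong : ∀ z ∈ s, (P z : ℤ) ∣ b + z.2 := by
    intro z hz
    have h1 := hb z hz
    have : b + z.2 = b - (-z.2) := by ring
    rw [this]; exact h1
  refine ⟨pt (A : ℝ) (b : ℝ), ?_⟩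
  intro p q hgcd hball
  rw [Metric.mem_closedBall] at hball
  -- coordinate bounds
  have h0 := (coord_le_dist (pt (p:ℝ) (q:ℝ)) (pt (A:ℝ) (b:ℝ)) 0).trans hball
  have h1 := (coord_le_dist (pt (p:ℝ) (q:ℝ)) (pt (A:ℝ) (b:ℝ)) 1).trans hball
  rw [pt_apply_zero, pt_apply_zero, Real.dist_eq] at h0
  rw [pt_apply_one, pt_apply_one, Real.dist_eq] at h1
  have hi : |p - A| ≤ (M : ℤ) := by
    have h : |((p - A : ℤ) : ℝ)| ≤ (M : ℝ) := by
      push_cast; exact h0.trans hRM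
    rw [← Int.cast_abs] at h
    exact_mod_cast h
  have hjb : |q - b| ≤ (M : ℤ) := by
    have h : |((q - b : ℤ) : ℝ)| ≤ (M : ℝ) := by
      push_cast; exact h1.trans hRM
    rw [← Int.cast_abs] at h
    exact_mod_cast h
  set z : ℤ × ℤ := (p - A, q - b) with hz2
  have hi' := abs_le.1 hi
  have hj' := abs_le.1 hjb
  have hzs : z ∈ s := by
    simp only [hs, hz2, Finset.mem_product, Finset.mem_Icc]
    omega
  -- the prime P z divides both p and q
  have hdp : (P z : ℤ) ∣ p := by
    have := hAcong z hzs
    simpa [hz2] using this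
  have hdq : (P z : ℤ) ∣ q := by
    have := hBcong z hzs
    simpa [hz2] using this
  have hdvdgcd : (P z : ℤ) ∣ (Int.gcd p q : ℤ) := Int.dvd_coe_gcd hdp hdq
  have hdvdgcd' : P z ∣ Int.gcd p q := Int.ofNat_dvd.1 hdvdgcd
  have hp0 : p ≠ 0 := by omega
  have hgpos : 0 < Int.gcd p q := Int.gcd_pos_of_ne_zero_left q hp0
  have := Nat.le_of_dvd hgpos hdvdgcd'
  have := hPN z
  omega
end

section
/- For every positive integer N and every integer n > 0, there exist integers x and y such that for all i, j with 1 ≤ i ≤ n and 1 ≤ j ≤ n, gcd(x+i, y+j) > N. -/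
/-- For every positive integer `N` and every `n > 0`, there exist integers `x, y` such that
`gcd(x+i, y+j) > N` for all `1 ≤ i, j ≤ n`. -/
theorem exists_gcd_desert (N : ℕ) (hN : 0 < N) (n : ℤ) (hn : 0 < n) :
    ∃ x y : ℤ, ∀ i j : ℤ, 1 ≤ i → i ≤ n → 1 ≤ j → j ≤ n →
      N < Int.gcd (x + i) (y + j) := by
  classical
  -- infinitely many primes greater than N
  have hInf : {p : ℕ | p.Prime ∧ N < p}.Infinite := by
    refine (Nat.infinite_setOf_prime.diff (Set.finite_Iic N)).mono ?_
    rintro p ⟨hp, hle⟩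
    exact ⟨hp, by simpa using hle⟩
  let emb := hInf.natEmbedding
  -- a distinct prime > N for each pair (i, j)
  let p : ℤ × ℤ → ℕ := fun q => (emb (Encodable.encode q)).1
  have hp_prime : ∀ q, (p q).Prime := fun q => (emb (Encodable.encode q)).2.1
  have hp_gt : ∀ q, N < p q := fun q => (emb (Encodable.encode q)).2.2
  have hp_inj : Function.Injective p := fun q q' h =>
    Encodable.encode_injective (emb.injective (Subtype.val_injective h))
  set t : Finset (ℤ × ℤ) := Finset.Icc 1 n ×ˢ Finset.Icc 1 n with ht
  have hs : ∀ q ∈ t, p q ≠ 0 := fun q _ => (hp_prime q).ne_zero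
  have pp : Set.Pairwise ↑t (Function.onFun Nat.Coprime p) := fun q _ q' _ hne =>
    (Nat.coprime_primes (hp_prime q) (hp_prime q')).mpr (fun h => hne (hp_inj h))
  let a1 : ℤ × ℤ → ℕ := fun q => ((-q.1) % (p q : ℤ)).toNat
  let a2 : ℤ × ℤ → ℕ := fun q => ((-q.2) % (p q : ℤ)).toNat
  obtain ⟨x0, hx0⟩ := Nat.chineseRemainderOfFinset a1 p t hs pp
  obtain ⟨y0, hy0⟩ := Nat.chineseRemainderOfFinset a2 p t hs pp
  refine ⟨(x0 : ℤ), (y0 : ℤ), ?_⟩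
  intro i j hi hin hj hjn
  have hq : (i, j) ∈ t := by
    simp [ht, Finset.mem_Icc, hi, hin, hj, hjn]
  have hppos : (0 : ℤ) < (p (i, j) : ℤ) := by exact_mod_cast (hp_prime (i, j)).pos
  -- p divides x0 + i
  have key : ∀ (z0 : ℕ) (k : ℤ), (z0 ≡ ((-k) % (p (i,j) : ℤ)).toNat [MOD p (i,j)]) →
      (p (i,j) : ℤ) ∣ ((z0 : ℤ) + k) := by
    intro z0 k hmod
    have h1 : (z0 : ℤ) % (p (i,j) : ℤ) = ((((-k) % (p (i,j) : ℤ)).toNat : ℤ)) % (p (i,j) : ℤ) := by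
      exact_mod_cast hmod
    have h2 : ((((-k) % (p (i,j) : ℤ)).toNat : ℤ)) = (-k) % (p (i,j) : ℤ) :=
      Int.toNat_of_nonneg (Int.emod_nonneg _ (by positivity))
    have h3 : (z0 : ℤ) % (p (i,j) : ℤ) = (-k) % (p (i,j) : ℤ) := by
      rw [h1, h2, Int.emod_emod_of_dvd _ dvd_rfl]
    have h4 : (p (i,j) : ℤ) ∣ (-k) - (z0 : ℤ) := Int.ModEq.dvd h3
    have := (dvd_neg).mpr h4
    simpa [neg_sub, sub_neg_eq_add, add_comm] using this
  have hd1 : (p (i,j) : ℤ) ∣ ((x0 : ℤ) + i) := key x0 i (hx0 (i, j) hq)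
  have hd2 : (p (i,j) : ℤ) ∣ ((y0 : ℤ) + j) := key y0 j (hy0 (i, j) hq)
  have hdg : (p (i,j) : ℤ) ∣ (Int.gcd ((x0 : ℤ) + i) ((y0 : ℤ) + j) : ℤ) :=
    by exact_mod_cast Int.dvd_gcd hd1 hd2
  have hdgn : p (i,j) ∣ Int.gcd ((x0 : ℤ) + i) ((y0 : ℤ) + j) := by exact_mod_cast hdg
  have hne : (x0 : ℤ) + i ≠ 0 := by positivity
  have hgpos : 0 < Int.gcd ((x0 : ℤ) + i) ((y0 : ℤ) + j) :=
    Int.gcd_pos_iff.mpr (Or.inl hne)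
  exact lt_of_lt_of_le (hp_gt (i, j)) (Nat.le_of_dvd hgpos hdgn)
end

section
/- Let l, l' be nonzero vectors in ℝ² pointing in the same direction with l' = λ·l for some irrational λ > 0, and let h, h' ∈ ℝ². Suppose the components of h and h' orthogonal to l satisfy ‖h₂ - h'₂‖ < r/2 for a given r > 0. Then there exist integers n, n' such that ‖(h + n·l) - (h' + n'·l')‖ < r. -/
open scoped RealInnerProductSpace

/-- The subgroup `ℤ + ℤ·λ` of `ℝ`. -/
def intLatticeSubgroup (lam : ℝ) : AddSubgroup ℝ where
  carrier := {x : ℝ | ∃ n n' : ℤ, x = n + n' * lam}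
  zero_mem' := ⟨0, 0, by simp⟩
  add_mem' := by
    rintro a b ⟨n, n', rfl⟩ ⟨m, m', rfl⟩
    exact ⟨n + m, n' + m', by push_cast; ring⟩
  neg_mem' := by
    rintro a ⟨n, n', rfl⟩
    exact ⟨-n, -n', by push_cast; ring⟩

theorem dense_intLatticeSubgroup {lam : ℝ} (hlam : Irrational lam) :
    Dense (intLatticeSubgroup lam : Set ℝ) := by
  rcases (intLatticeSubgroup lam).dense_or_cyclic with h | ⟨a, ha⟩
  · exact h
  · exfalso
    have h1 : (1 : ℝ) ∈ intLatticeSubgroup lam := ⟨1, 0, by simp⟩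
    have h2 : lam ∈ intLatticeSubgroup lam := ⟨0, 1, by simp⟩
    rw [ha, AddSubgroup.mem_closure_singleton] at h1 h2
    obtain ⟨k, hk⟩ := h1
    obtain ⟨m, hm⟩ := h2
    rw [zsmul_eq_mul] at hk hm
    have hk0 : (k : ℝ) ≠ 0 := by
      intro h0
      rw [h0, zero_mul] at hk; exact one_ne_zero hk.symm
    have : lam = (m : ℝ) / (k : ℝ) := by
      field_simp
      rw [← hm]
      calc (m : ℝ) * a * k = m * (k * a) := by ring
        _ = m := by rw [hk, mul_one]
    apply hlam
    exact ⟨(m : ℚ) / (k : ℚ), by push_cast [this]; norm_num⟩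

theorem exists_int_comb_close {lam : ℝ} (hlam : Irrational lam) (c ε : ℝ) (hε : 0 < ε) :
    ∃ n n' : ℤ, |c + ((n : ℝ) - (n' : ℝ) * lam)| < ε := by
  have hd := dense_intLatticeSubgroup hlam
  have := hd (-c)
  rw [Metric.mem_closure_iff] at this
  obtain ⟨s, hs, hdist⟩ := this ε hε
  obtain ⟨n, n', rfl⟩ := hs
  refine ⟨n, -n', ?_⟩
  rw [Real.dist_eq] at hdist
  push_cast
  have : c + ((n : ℝ) - -(n' : ℝ) * lam) = -(-c - (n + n' * lam)) := by ring
  rw [this, abs_neg]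
  exact hdist

/-- If `l ≠ 0`, `l' = λ • l` with `λ > 0` irrational, and the components of `h, h'`
orthogonal to `l` differ by less than `r/2`, then some pair `h + n • l`, `h' + n' • l'`
lie within distance `r` of each other. -/
theorem exists_close_dehn_twist_images
    (l h h' : EuclideanSpace ℝ (Fin 2)) (hl : l ≠ 0)
    (lam : ℝ) (hlam : Irrational lam) (hpos : 0 < lam)
    (r : ℝ) (hr : 0 < r)
    (hperp : ‖(h - (⟪h, l⟫ / ⟪l, l⟫) • l) - (h' - (⟪h', l⟫ / ⟪l, l⟫) • l)‖ < r / 2) :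
    ∃ n n' : ℤ, ‖(h + n • l) - (h' + n' • (lam • l))‖ < r := by
  have hlnorm : (0 : ℝ) < ‖l‖ := norm_pos_iff.mpr hl
  set c : ℝ := ⟪h, l⟫ / ⟪l, l⟫ - ⟪h', l⟫ / ⟪l, l⟫ with hc
  obtain ⟨n, n', hn⟩ := exists_int_comb_close hlam c (r / 2 / ‖l‖) (by positivity)
  refine ⟨n, n', ?_⟩
  set P := (h - (⟪h, l⟫ / ⟪l, l⟫) • l) - (h' - (⟪h', l⟫ / ⟪l, l⟫) • l) with hP
  have key : (h + n • l) - (h' + n' • (lam • l)) = P + (c + ((n : ℝ) - (n' : ℝ) * lam)) • l := by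
    rw [hP, hc]
    simp only [← Int.cast_smul_eq_zsmul ℝ, smul_smul]
    module
  rw [key]
  calc ‖P + (c + ((n : ℝ) - (n' : ℝ) * lam)) • l‖
      ≤ ‖P‖ + ‖(c + ((n : ℝ) - (n' : ℝ) * lam)) • l‖ := norm_add_le _ _
    _ = ‖P‖ + |c + ((n : ℝ) - (n' : ℝ) * lam)| * ‖l‖ := by rw [norm_smul, Real.norm_eq_abs]
    _ < r / 2 + (r / 2 / ‖l‖) * ‖l‖ := by
        apply add_lt_add hperp
        exact mul_lt_mul_of_pos_right hn hlnorm
    _ = r := by field_simp; ring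
end

section
/- Let A ⊆ ℝ² contain two arithmetic progressions {h + n·l : n ∈ ℤ} and {h' + n·l' : n ∈ ℤ} where l' = λ·l with λ > 0 irrational and l ≠ 0, and where the components of h - h' orthogonal to l have norm at most some δ ≥ 0. Then for every r > 2δ, A is not uniformly discrete at scale r; in particular if δ can be taken as 0, A is not uniformly discrete. -/
open scoped RealInnerProductSpace

/-- If `A ⊆ ℝ²` contains two arithmetic progressions `{h + n • l}` and `{h' + n • (λ • l)}`
with `λ > 0` irrational, `l ≠ 0`, and the component of `h - h'` orthogonal to `l` has norm
at most `δ`, then for every `r > 2δ` the set `A` has two distinct points at distance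
less than `r`. -/
theorem not_uniformly_discrete_of_two_progressions
    (A : Set (EuclideanSpace ℝ (Fin 2)))
    (h h' l : EuclideanSpace ℝ (Fin 2)) (hl : l ≠ 0)
    (lam : ℝ) (hlam : Irrational lam) (hpos : 0 < lam)
    (δ : ℝ) (hδ : 0 ≤ δ)
    (hA1 : ∀ n : ℤ, h + n • l ∈ A)
    (hA2 : ∀ n : ℤ, h' + n • (lam • l) ∈ A)
    (hperp : ‖(h - h') - (⟪h - h', l⟫ / ⟪l, l⟫) • l‖ ≤ δ) :
    ∀ r : ℝ, 2 * δ < r → ∃ x ∈ A, ∃ y ∈ A, x ≠ y ∧ dist x y < r := by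
  intro r hr
  set c : ℝ := ⟪h - h', l⟫ / ⟪l, l⟫ with hc
  set w : EuclideanSpace ℝ (Fin 2) := (h - h') - c • l with hw
  have hlnorm : (0:ℝ) < ‖l‖ := norm_pos_iff.mpr hl
  have hll : ⟪l, l⟫ ≠ 0 := inner_self_ne_zero.mpr hl
  have hrδ : (0:ℝ) < r - δ := by linarith
  have hε : (0:ℝ) < (r - δ) / ‖l‖ := div_pos hrδ hlnorm
  -- density of ℤ + ℤ·lam in ℝ
  have hdense : Dense ((AddSubgroup.closure {(1:ℝ), lam} : AddSubgroup ℝ) : Set ℝ) := by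
    rcases AddSubgroup.dense_or_cyclic (AddSubgroup.closure {(1:ℝ), lam}) with hd | ⟨a, ha⟩
    · exact hd
    · exfalso
      have h1 : (1:ℝ) ∈ AddSubgroup.closure {(1:ℝ), lam} :=
        AddSubgroup.subset_closure (by simp)
      have h2 : lam ∈ AddSubgroup.closure {(1:ℝ), lam} :=
        AddSubgroup.subset_closure (by simp)
      rw [ha, AddSubgroup.mem_closure_singleton] at h1 h2
      obtain ⟨p, hp⟩ := h1
      obtain ⟨q, hq⟩ := h2
      have hp' : (p : ℝ) * a = 1 := by rw [← zsmul_eq_mul]; exact hp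
      have hq' : (q : ℝ) * a = lam := by rw [← zsmul_eq_mul]; exact hq
      have hp0 : (p : ℝ) ≠ 0 := by
        intro h0; rw [h0, zero_mul] at hp'; exact one_ne_zero hp'.symm
      apply hlam
      refine ⟨(q : ℚ) / (p : ℚ), ?_⟩
      have ha0 : a = 1 / (p : ℝ) := by field_simp at hp' ⊢; linarith [hp']
      rw [← hq', ha0]
      push_cast
      field_simp
  -- find an element of the subgroup in (-c, -c + ε)
  obtain ⟨s, hsS, hs1, hs2⟩ :
      ∃ s ∈ (AddSubgroup.closure {(1:ℝ), lam} : AddSubgroup ℝ), s ∈ Set.Ioo (-c) (-c + (r - δ) / ‖l‖) := by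
    have hlt : -c < -c + (r - δ) / ‖l‖ := by linarith
    obtain ⟨s, hsS, hs⟩ := hdense.exists_between hlt
    exact ⟨s, hsS, hs⟩
  rw [AddSubgroup.mem_closure_pair] at hsS
  obtain ⟨a, b, hab⟩ := hsS
  have hab' : (a : ℝ) + (b : ℝ) * lam = s := by
    rw [← hab]; push_cast [zsmul_eq_mul]; ring
  -- the two points
  refine ⟨h + a • l, hA1 a, h' + (-b) • (lam • l), hA2 (-b), ?_, ?_⟩
  · -- distinctness
    set v : ℝ := c + s with hv
    have hv0 : 0 < v := by simp only [hv]; linarith [hs1]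
    have key : (h + a • l) - (h' + (-b) • (lam • l)) = w + v • l := by
      rw [← Int.cast_smul_eq_zsmul ℝ a l, ← Int.cast_smul_eq_zsmul ℝ (-b) (lam • l)]
      rw [hw, hv, ← hab']
      push_cast
      module
    intro heq
    have h0 : w + v • l = 0 := by rw [← key, heq, sub_self]
    have hwl : ⟪w, l⟫ = 0 := by
      rw [hw, hc]
      rw [inner_sub_left, real_inner_smul_left, div_mul_cancel₀ _ hll, sub_self]
    have : ⟪w + v • l, l⟫ = v * ⟪l, l⟫ := by
      rw [inner_add_left, real_inner_smul_left, hwl, zero_add]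
    rw [h0, inner_zero_left] at this
    have : v * ⟪l, l⟫ ≠ 0 := mul_ne_zero (ne_of_gt hv0) hll
    exact this (by linarith [‹(0:ℝ) = v * ⟪l, l⟫›])
  · -- distance estimate
    set v : ℝ := c + s with hv
    have hv0 : 0 < v := by simp only [hv]; linarith [hs1]
    have hvε : v < (r - δ) / ‖l‖ := by simp only [hv]; linarith [hs2]
    have key : (h + a • l) - (h' + (-b) • (lam • l)) = w + v • l := by
      rw [← Int.cast_smul_eq_zsmul ℝ a l, ← Int.cast_smul_eq_zsmul ℝ (-b) (lam • l)]
      rw [hw, hv, ← hab']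
      push_cast
      module
    rw [dist_eq_norm, key]
    calc ‖w + v • l‖ ≤ ‖w‖ + ‖v • l‖ := norm_add_le _ _
      _ = ‖w‖ + |v| * ‖l‖ := by rw [norm_smul, Real.norm_eq_abs]
      _ ≤ δ + v * ‖l‖ := by
          rw [abs_of_pos hv0]
          exact add_le_add_left hperp _
      _ < δ + ((r - δ) / ‖l‖) * ‖l‖ := by
          have := mul_lt_mul_of_pos_right hvε hlnorm
          linarith
      _ = r := by field_simp; ring
end

section
/- The set S = {(a,b) ∈ ℤ² : gcd(a,b) = 1} ∪ (ℤ² + v) ∪ (ℤ² - v), where v = (√2 - 1, √3 - 1), is uniformly discrete in ℝ²: there exists r > 0 such that any two distinct points of S are at distance greater than r. -/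
lemma pt_dist (a b c d : ℝ) :
    dist (pt a b) (pt c d) = Real.sqrt ((a - c) ^ 2 + (b - d) ^ 2) := by
  rw [EuclideanSpace.dist_eq]
  simp [pt, Fin.sum_univ_two, Real.dist_eq, sq_abs]

lemma fst_le (a b c d : ℝ) : |a - c| ≤ dist (pt a b) (pt c d) := by
  rw [pt_dist, ← Real.sqrt_sq_eq_abs]
  exact Real.sqrt_le_sqrt (by nlinarith [sq_nonneg (b - d)])

lemma snd_le (a b c d : ℝ) : |b - d| ≤ dist (pt a b) (pt c d) := by
  rw [pt_dist, ← Real.sqrt_sq_eq_abs]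
  exact Real.sqrt_le_sqrt (by nlinarith [sq_nonneg (a - c)])

lemma key1 (n : ℤ) : 1/10 < |(n : ℝ) + Real.sqrt 2| := by
  have h1 : (1.41 : ℝ) < Real.sqrt 2 := by
    nlinarith [Real.sq_sqrt (by norm_num : (2:ℝ) ≥ 0), Real.sqrt_nonneg 2]
  have h2 : Real.sqrt 2 < 1.42 := by
    nlinarith [Real.sq_sqrt (by norm_num : (2:ℝ) ≥ 0), Real.sqrt_nonneg 2]
  rw [lt_abs]
  rcases le_or_gt (-1 : ℤ) n with h | h
  · left; have : (-1 : ℝ) ≤ n := by exact_mod_cast h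
    linarith
  · right; have : (n : ℝ) ≤ -2 := by exact_mod_cast (by omega : n ≤ (-2:ℤ))
    linarith

lemma key2 (n : ℤ) : 1/10 < |(n : ℝ) + 2 * Real.sqrt 2| := by
  have h1 : (1.41 : ℝ) < Real.sqrt 2 := by
    nlinarith [Real.sq_sqrt (by norm_num : (2:ℝ) ≥ 0), Real.sqrt_nonneg 2]
  have h2 : Real.sqrt 2 < 1.42 := by
    nlinarith [Real.sq_sqrt (by norm_num : (2:ℝ) ≥ 0), Real.sqrt_nonneg 2]
  rw [lt_abs]
  rcases le_or_gt (-2 : ℤ) n with h | h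
  · left; have : (-2 : ℝ) ≤ n := by exact_mod_cast h
    linarith
  · right; have : (n : ℝ) ≤ -3 := by exact_mod_cast (by omega : n ≤ (-3:ℤ))
    linarith

lemma dist_int (a b c d : ℤ) (s t : ℝ) (h : ¬(a = c ∧ b = d)) :
    1 ≤ dist (pt ((a:ℝ) + s) ((b:ℝ) + t)) (pt ((c:ℝ) + s) ((d:ℝ) + t)) := by
  rcases not_and_or.mp h with h | h
  · refine le_trans ?_ (fst_le _ _ _ _)
    have : 1 ≤ |a - c| := Int.one_le_abs (sub_ne_zero.mpr h)
    have : (1:ℝ) ≤ |((a - c : ℤ) : ℝ)| := by rw [← Int.cast_abs]; exact_mod_cast this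
    calc (1:ℝ) ≤ |((a - c : ℤ) : ℝ)| := this
      _ = |(a:ℝ) + s - ((c:ℝ) + s)| := by push_cast; ring_nf
  · refine le_trans ?_ (snd_le _ _ _ _)
    have : 1 ≤ |b - d| := Int.one_le_abs (sub_ne_zero.mpr h)
    have : (1:ℝ) ≤ |((b - d : ℤ) : ℝ)| := by rw [← Int.cast_abs]; exact_mod_cast this
    calc (1:ℝ) ≤ |((b - d : ℤ) : ℝ)| := this
      _ = |(b:ℝ) + t - ((d:ℝ) + t)| := by push_cast; ring_nf

lemma cross1 (n : ℤ) (a b c d : ℝ) (hn : |(n : ℝ) + Real.sqrt 2| = |a - c|) :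
    1/10 < dist (pt a b) (pt c d) := by
  have h := key1 n; rw [hn] at h; exact lt_of_lt_of_le h (fst_le a b c d)

lemma cross2 (n : ℤ) (a b c d : ℝ) (hn : |(n : ℝ) + 2 * Real.sqrt 2| = |a - c|) :
    1/10 < dist (pt a b) (pt c d) := by
  have h := key2 n; rw [hn] at h; exact lt_of_lt_of_le h (fst_le a b c d)

/-- The set `S = {(a,b) ∈ ℤ² : gcd(a,b) = 1} ∪ (ℤ² + v) ∪ (ℤ² - v)` with
`v = (√2 - 1, √3 - 1)` is uniformly discrete in `ℝ²`. -/
theorem holonomy_set_uniformly_discrete :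
    ∃ r : ℝ, 0 < r ∧
      ∀ x ∈ ({x : EuclideanSpace ℝ (Fin 2) | ∃ a b : ℤ, Int.gcd a b = 1 ∧ x = pt (a : ℝ) ((b : ℝ))}
          ∪ {x | ∃ a b : ℤ, x = pt ((a : ℝ) + (Real.sqrt 2 - 1)) ((b : ℝ) + (Real.sqrt 3 - 1))}
          ∪ {x | ∃ a b : ℤ, x = pt ((a : ℝ) - (Real.sqrt 2 - 1)) ((b : ℝ) - (Real.sqrt 3 - 1))}),
      ∀ y ∈ ({x : EuclideanSpace ℝ (Fin 2) | ∃ a b : ℤ, Int.gcd a b = 1 ∧ x = pt (a : ℝ) ((b : ℝ))}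
          ∪ {x | ∃ a b : ℤ, x = pt ((a : ℝ) + (Real.sqrt 2 - 1)) ((b : ℝ) + (Real.sqrt 3 - 1))}
          ∪ {x | ∃ a b : ℤ, x = pt ((a : ℝ) - (Real.sqrt 2 - 1)) ((b : ℝ) - (Real.sqrt 3 - 1))}),
        x ≠ y → r < dist x y := by
  refine ⟨1/10, by norm_num, ?_⟩
  rintro x (((⟨a, b, -, rfl⟩ | ⟨a, b, rfl⟩) | ⟨a, b, rfl⟩)) y
      (((⟨c, d, -, rfl⟩ | ⟨c, d, rfl⟩) | ⟨c, d, rfl⟩)) hne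
  -- A A
  · have h : ¬(a = c ∧ b = d) := by rintro ⟨rfl, rfl⟩; exact hne rfl
    have := dist_int a b c d 0 0 h
    simp only [add_zero] at this
    linarith
  -- A B
  · exact cross1 (c - a - 1) _ _ _ _ (by rw [← abs_neg]; congr 1; push_cast; ring)
  -- A C
  · exact cross1 (a - c - 1) _ _ _ _ (by congr 1; push_cast; ring)
  -- B A
  · exact cross1 (a - c - 1) _ _ _ _ (by congr 1; push_cast; ring)
  -- B B
  · have h : ¬(a = c ∧ b = d) := by rintro ⟨rfl, rfl⟩; exact hne rfl
    have := dist_int a b c d (Real.sqrt 2 - 1) (Real.sqrt 3 - 1) h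
    linarith
  -- B C
  · exact cross2 (a - c - 2) _ _ _ _ (by congr 1; push_cast; ring)
  -- C A
  · exact cross1 (c - a - 1) _ _ _ _ (by rw [← abs_neg]; congr 1; push_cast; ring)
  -- C B
  · exact cross2 (c - a - 2) _ _ _ _ (by rw [← abs_neg]; congr 1; push_cast; ring)
  -- C C
  · have h : ¬(a = c ∧ b = d) := by rintro ⟨rfl, rfl⟩; exact hne rfl
    have := dist_int a b c d (-(Real.sqrt 2 - 1)) (-(Real.sqrt 3 - 1)) h
    simp only [← sub_eq_add_neg] at this
    linarith
end

section
/- The set S = {(a,b) ∈ ℤ² : gcd(a,b) = 1} ∪ (ℤ² + v) ∪ (ℤ² - v), where v = (√2 - 1, √3 - 1), is a Delone set in ℝ²: it is both uniformly discrete and relatively dense. -/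
lemma dist_pt (a b a' b' : ℝ) :
    dist (pt a b) (pt a' b') = Real.sqrt ((a - a')^2 + (b - b')^2) := by
  rw [EuclideanSpace.dist_eq]
  simp [Fin.sum_univ_two, pt, Real.dist_eq, sq_abs]

lemma sqrt2_lt : Real.sqrt 2 < 1.45 := by
  nlinarith [Real.sq_sqrt (by norm_num : (2:ℝ) ≥ 0), Real.sqrt_nonneg 2]

lemma lt_sqrt2 : (1.4:ℝ) < Real.sqrt 2 := by
  nlinarith [Real.sq_sqrt (by norm_num : (2:ℝ) ≥ 0), Real.sqrt_nonneg 2]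

lemma A1 (k : ℤ) : 1/10 < |(k:ℝ) + Real.sqrt 2| := by
  rcases le_or_gt (-1 : ℤ) k with h | h
  · have h' : (-1:ℝ) ≤ (k:ℝ) := by exact_mod_cast h
    rw [abs_of_pos (by nlinarith [lt_sqrt2])]
    nlinarith [lt_sqrt2]
  · have hk : k ≤ -2 := by omega
    have h' : (k:ℝ) ≤ -2 := by exact_mod_cast hk
    rw [abs_of_neg (by nlinarith [sqrt2_lt])]
    nlinarith [sqrt2_lt]

lemma A1' (k : ℤ) : 1/10 < |(k:ℝ) - Real.sqrt 2| := by
  have := A1 (-k)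
  rw [Int.cast_neg, show -(k:ℝ) + Real.sqrt 2 = -((k:ℝ) - Real.sqrt 2) by ring,
    abs_neg] at this
  exact this

lemma A2 (k : ℤ) : 1/10 < |(k:ℝ) + 2 * Real.sqrt 2| := by
  rcases le_or_gt (-2 : ℤ) k with h | h
  · have h' : (-2:ℝ) ≤ (k:ℝ) := by exact_mod_cast h
    rw [abs_of_pos (by nlinarith [lt_sqrt2])]
    nlinarith [lt_sqrt2]
  · have hk : k ≤ -3 := by omega
    have h' : (k:ℝ) ≤ -3 := by exact_mod_cast hk
    rw [abs_of_neg (by nlinarith [sqrt2_lt])]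
    nlinarith [sqrt2_lt]

lemma A2' (k : ℤ) : 1/10 < |(k:ℝ) - 2 * Real.sqrt 2| := by
  have := A2 (-k)
  rw [Int.cast_neg, show -(k:ℝ) + 2 * Real.sqrt 2 = -((k:ℝ) - 2 * Real.sqrt 2) by ring,
    abs_neg] at this
  exact this

lemma A0 (k : ℤ) (hk : k ≠ 0) : 1/10 < |(k:ℝ)| := by
  have h1 : (1:ℤ) ≤ |k| := Int.one_le_abs hk
  have h2 : (1:ℝ) ≤ ((|k| : ℤ) : ℝ) := by exact_mod_cast h1
  rw [Int.cast_abs] at h2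
  linarith

lemma key (p0 p1 q0 q1 : ℝ) (h : 1/10 < |p0 - q0| ∨ 1/10 < |p1 - q1|) :
    (1:ℝ)/10 < dist (pt p0 p1) (pt q0 q1) := by
  rw [dist_pt]
  rcases h with h | h
  · calc (1:ℝ)/10 < |p0 - q0| := h
      _ = Real.sqrt ((p0-q0)^2) := (Real.sqrt_sq_eq_abs _).symm
      _ ≤ _ := Real.sqrt_le_sqrt (by nlinarith [sq_nonneg (p1 - q1)])
  · calc (1:ℝ)/10 < |p1 - q1| := h
      _ = Real.sqrt ((p1-q1)^2) := (Real.sqrt_sq_eq_abs _).symm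
      _ ≤ _ := Real.sqrt_le_sqrt (by nlinarith [sq_nonneg (p0 - q0)])

/-- same-family case -/
lemma key2_s8 (a b a' b' : ℤ) (c d : ℝ)
    (h : pt ((a:ℝ) + c) ((b:ℝ) + d) ≠ pt ((a':ℝ) + c) ((b':ℝ) + d)) :
    (1:ℝ)/10 < dist (pt ((a:ℝ) + c) ((b:ℝ) + d)) (pt ((a':ℝ) + c) ((b':ℝ) + d)) := by
  apply key
  by_cases ha : a = a'
  · right
    have hb : b ≠ b' := by
      rintro rfl; exact h (by rw [ha])
    have : ((b:ℝ) + d) - ((b':ℝ) + d) = ((b - b' : ℤ) : ℝ) := by push_cast; ring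
    rw [this]; exact A0 _ (sub_ne_zero.mpr hb)
  · left
    have : ((a:ℝ) + c) - ((a':ℝ) + c) = ((a - a' : ℤ) : ℝ) := by push_cast; ring
    rw [this]; exact A0 _ (sub_ne_zero.mpr ha)
/-- The set `S = {(a,b) ∈ ℤ² : gcd(a,b) = 1} ∪ (ℤ² + v) ∪ (ℤ² - v)` with
`v = (√2 - 1, √3 - 1)` is a Delone set in `ℝ²`: uniformly discrete and relatively dense. -/
theorem holonomy_set_is_delone :
    (∃ r : ℝ, 0 < r ∧
      ∀ x ∈ ({x : EuclideanSpace ℝ (Fin 2) | ∃ a b : ℤ, Int.gcd a b = 1 ∧ x = pt (a : ℝ) ((b : ℝ))}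
          ∪ {x | ∃ a b : ℤ, x = pt ((a : ℝ) + (Real.sqrt 2 - 1)) ((b : ℝ) + (Real.sqrt 3 - 1))}
          ∪ {x | ∃ a b : ℤ, x = pt ((a : ℝ) - (Real.sqrt 2 - 1)) ((b : ℝ) - (Real.sqrt 3 - 1))}),
      ∀ y ∈ ({x : EuclideanSpace ℝ (Fin 2) | ∃ a b : ℤ, Int.gcd a b = 1 ∧ x = pt (a : ℝ) ((b : ℝ))}
          ∪ {x | ∃ a b : ℤ, x = pt ((a : ℝ) + (Real.sqrt 2 - 1)) ((b : ℝ) + (Real.sqrt 3 - 1))}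
          ∪ {x | ∃ a b : ℤ, x = pt ((a : ℝ) - (Real.sqrt 2 - 1)) ((b : ℝ) - (Real.sqrt 3 - 1))}),
        x ≠ y → r < dist x y) ∧
    (∃ R : ℝ, 0 < R ∧
      ∀ c : EuclideanSpace ℝ (Fin 2),
        ∃ y ∈ ({x : EuclideanSpace ℝ (Fin 2) | ∃ a b : ℤ, Int.gcd a b = 1 ∧ x = pt (a : ℝ) ((b : ℝ))}
            ∪ {x | ∃ a b : ℤ, x = pt ((a : ℝ) + (Real.sqrt 2 - 1)) ((b : ℝ) + (Real.sqrt 3 - 1))}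
            ∪ {x | ∃ a b : ℤ, x = pt ((a : ℝ) - (Real.sqrt 2 - 1)) ((b : ℝ) - (Real.sqrt 3 - 1))}),
          y ∈ Metric.closedBall c R) := by
  constructor
  · refine ⟨1/10, by norm_num, ?_⟩
    rintro x ((⟨a, b, -, rfl⟩ | ⟨a, b, rfl⟩) | ⟨a, b, rfl⟩) y
        ((⟨a', b', -, rfl⟩ | ⟨a', b', rfl⟩) | ⟨a', b', rfl⟩) hne
    -- gcd vs gcd
    · have := key2_s8 a b a' b' 0 0 (by simpa using hne)
      simpa using this
    -- gcd vs +v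
    · apply key; left
      have : (a:ℝ) - ((a':ℝ) + (Real.sqrt 2 - 1)) = ((a - a' + 1 : ℤ):ℝ) - Real.sqrt 2 := by
        push_cast; ring
      rw [this]; exact A1' _
    -- gcd vs -v
    · apply key; left
      have : (a:ℝ) - ((a':ℝ) - (Real.sqrt 2 - 1)) = ((a - a' - 1 : ℤ):ℝ) + Real.sqrt 2 := by
        push_cast; ring
      rw [this]; exact A1 _
    -- +v vs gcd
    · apply key; left
      have : ((a:ℝ) + (Real.sqrt 2 - 1)) - (a':ℝ) = ((a - a' - 1 : ℤ):ℝ) + Real.sqrt 2 := by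
        push_cast; ring
      rw [this]; exact A1 _
    -- +v vs +v
    · exact key2_s8 a b a' b' _ _ hne
    -- +v vs -v
    · apply key; left
      have : ((a:ℝ) + (Real.sqrt 2 - 1)) - ((a':ℝ) - (Real.sqrt 2 - 1))
          = ((a - a' - 2 : ℤ):ℝ) + 2 * Real.sqrt 2 := by
        push_cast; ring
      rw [this]; exact A2 _
    -- -v vs gcd
    · apply key; left
      have : ((a:ℝ) - (Real.sqrt 2 - 1)) - (a':ℝ) = ((a - a' + 1 : ℤ):ℝ) - Real.sqrt 2 := by
        push_cast; ring
      rw [this]; exact A1' _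
    -- -v vs +v
    · apply key; left
      have : ((a:ℝ) - (Real.sqrt 2 - 1)) - ((a':ℝ) + (Real.sqrt 2 - 1))
          = ((a - a' + 2 : ℤ):ℝ) - 2 * Real.sqrt 2 := by
        push_cast; ring
      rw [this]; exact A2' _
    -- -v vs -v
    · have := key2_s8 a b a' b' (-(Real.sqrt 2 - 1)) (-(Real.sqrt 3 - 1))
        (by simpa [sub_eq_add_neg] using hne)
      simpa [sub_eq_add_neg] using this
  · refine ⟨3, by norm_num, ?_⟩
    intro c
    set a : ℤ := ⌊c 0 - (Real.sqrt 2 - 1)⌋ with ha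
    set b : ℤ := ⌊c 1 - (Real.sqrt 3 - 1)⌋ with hb
    refine ⟨pt ((a:ℝ) + (Real.sqrt 2 - 1)) ((b:ℝ) + (Real.sqrt 3 - 1)),
      Or.inl (Or.inr ⟨a, b, rfl⟩), ?_⟩
    rw [Metric.mem_closedBall]
    have hc : c = pt (c 0) (c 1) := by ext i; fin_cases i <;> rfl
    rw [hc, dist_pt]
    have h1 : |((a:ℝ) + (Real.sqrt 2 - 1)) - c 0| ≤ 1 := by
      have := Int.floor_le (c 0 - (Real.sqrt 2 - 1))
      have := Int.lt_floor_add_one (c 0 - (Real.sqrt 2 - 1))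
      rw [abs_le]; constructor <;> [linarith; linarith]
    have h2 : |((b:ℝ) + (Real.sqrt 3 - 1)) - c 1| ≤ 1 := by
      have := Int.floor_le (c 1 - (Real.sqrt 3 - 1))
      have := Int.lt_floor_add_one (c 1 - (Real.sqrt 3 - 1))
      rw [abs_le]; constructor <;> [linarith; linarith]
    have h1' := abs_le.mp h1
    have h2' := abs_le.mp h2
    calc Real.sqrt ((((a:ℝ) + (Real.sqrt 2 - 1)) - c 0)^2 + (((b:ℝ) + (Real.sqrt 3 - 1)) - c 1)^2)
        ≤ Real.sqrt 9 := Real.sqrt_le_sqrt (by nlinarith)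
      _ = 3 := by rw [show (9:ℝ) = 3^2 by norm_num, Real.sqrt_sq (by norm_num)]
end

section
/- The set {(p,q) ∈ ℤ² : gcd(p,q) = 1} of primitive lattice points is not relatively dense in ℝ²: for every R > 0 there is a ball of radius R in ℝ² containing no primitive lattice point. -/
set_option linter.unnecessarySimpa false


/-- The set of primitive lattice points `{(p,q) ∈ ℤ² : gcd(p,q) = 1}` is not relatively
dense in `ℝ²`: for every `R > 0` there is a ball of radius `R` containing no primitive
lattice point. -/
theorem primitive_lattice_points_not_relatively_dense :
    ∀ R : ℝ, 0 < R → ∃ c : EuclideanSpace ℝ (Fin 2),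
      ∀ p q : ℤ, Int.gcd p q = 1 →
        (pt (p : ℝ) ((q : ℝ)) : EuclideanSpace ℝ (Fin 2)) ∉ Metric.closedBall c R := by
  intro R hR
  obtain ⟨n, hn⟩ := exists_nat_ge R
  set m : ℕ := 2 * n + 1 with hm
  set ι := Fin m × Fin m
  -- distinct primes indexed by the grid
  set P : ι → ℕ := fun k => Nat.nth Nat.Prime ((finProdFinEquiv k : Fin (m * m)) : ℕ) with hP
  have hPprime : ∀ k, Nat.Prime (P k) := fun k => Nat.prime_nth_prime _
  have hPinj : Function.Injective P := by
    intro k l h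
    have := Nat.nth_injective Nat.infinite_setOf_prime h
    exact finProdFinEquiv.injective (Fin.val_injective this)
  have hcop : Pairwise (Function.onFun Nat.Coprime P) := fun k l h =>
    (Nat.coprime_primes (hPprime k) (hPprime l)).2 (fun e => h (hPinj e))
  set N : ℕ := ∏ k : ι, P k with hN
  haveI : NeZero N := ⟨Finset.prod_ne_zero_iff.2 fun k _ => (hPprime k).pos.ne'⟩
  set e := ZMod.prodEquivPi P hcop
  -- the residue systems
  have solve : ∀ t : ι → ℤ, ∃ a : ℤ, ∀ k : ι, (a : ZMod (P k)) = ((t k : ℤ) : ZMod (P k)) := by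
    intro t
    obtain ⟨a, ha⟩ := ZMod.intCast_surjective (n := N) (e.symm fun k => ((t k : ℤ) : ZMod (P k)))
    refine ⟨a, fun k => ?_⟩
    have h1 : e ((a : ℤ) : ZMod N) = fun k => ((t k : ℤ) : ZMod (P k)) := by
      rw [ha]; exact e.apply_symm_apply _
    have h2 : e ((a : ℤ) : ZMod N) = fun k => ((a : ℤ) : ZMod (P k)) := by
      have := map_intCast (e : ZMod N →+* Π k, ZMod (P k)) a
      exact this
    have := congrFun (h2.symm.trans h1) k
    simpa using this
  obtain ⟨a, ha⟩ := solve (fun k => -((k.1 : ℤ) - n))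
  obtain ⟨b, hb⟩ := solve (fun k => -((k.2 : ℤ) - n))
  refine ⟨pt a b, fun p q hpq hball => ?_⟩
  -- extract coordinate bounds
  have hdist : dist (pt (p:ℝ) (q:ℝ)) (pt (a:ℝ) (b:ℝ)) ≤ R := Metric.mem_closedBall.1 hball
  have hcoord : ∀ i : Fin 2, |pt (p:ℝ) (q:ℝ) i - pt (a:ℝ) (b:ℝ) i| ≤ R := by
    intro i
    have h1 : dist (pt (p:ℝ) (q:ℝ) i) (pt (a:ℝ) (b:ℝ) i) ≤ dist (pt (p:ℝ) (q:ℝ)) (pt (a:ℝ) (b:ℝ)) := by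
      have := EuclideanSpace.dist_eq (pt (p:ℝ) (q:ℝ)) (pt (a:ℝ) (b:ℝ))
      rw [this]
      have : dist (pt (p:ℝ) (q:ℝ) i) (pt (a:ℝ) (b:ℝ) i) ^ 2 ≤
          ∑ j, dist (pt (p:ℝ) (q:ℝ) j) (pt (a:ℝ) (b:ℝ) j) ^ 2 :=
        Finset.single_le_sum (f := fun j => dist (pt (p:ℝ) (q:ℝ) j) (pt (a:ℝ) (b:ℝ) j) ^ 2)
          (fun j _ => sq_nonneg _) (Finset.mem_univ i)
      calc dist (pt (p:ℝ) (q:ℝ) i) (pt (a:ℝ) (b:ℝ) i)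
          = Real.sqrt (dist (pt (p:ℝ) (q:ℝ) i) (pt (a:ℝ) (b:ℝ) i) ^ 2) := by
            rw [Real.sqrt_sq dist_nonneg]
        _ ≤ _ := Real.sqrt_le_sqrt this
    rw [Real.dist_eq] at h1
    exact h1.trans hdist
  have hpt0 : ∀ x y : ℝ, pt x y 0 = x := fun x y => rfl
  have hpt1 : ∀ x y : ℝ, pt x y 1 = y := fun x y => rfl
  have hx : |(p:ℝ) - a| ≤ R := by have := hcoord 0; rwa [hpt0, hpt0] at this
  have hy : |(q:ℝ) - b| ≤ R := by have := hcoord 1; rwa [hpt1, hpt1] at this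
  have hxn : |p - a| ≤ (n:ℤ) := by
    have : |(p:ℝ) - a| ≤ (n : ℝ) := hx.trans hn
    exact_mod_cast (by push_cast at this ⊢; exact_mod_cast this : |((p - a : ℤ) : ℝ)| ≤ (n:ℝ))
  have hyn : |q - b| ≤ (n:ℤ) := by
    have : |(q:ℝ) - b| ≤ (n : ℝ) := hy.trans hn
    exact_mod_cast (by push_cast at this ⊢; exact_mod_cast this : |((q - b : ℤ) : ℝ)| ≤ (n:ℝ))
  rw [abs_le] at hxn hyn
  -- construct the index
  have h1 : ((p - a + n).toNat) < m := by omega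
  have h2 : ((q - b + n).toNat) < m := by omega
  set k : ι := (⟨(p - a + n).toNat, h1⟩, ⟨(q - b + n).toNat, h2⟩) with hk
  have hk1 : ((k.1 : ℤ) - n) = p - a := by simp [hk]; omega
  have hk2 : ((k.2 : ℤ) - n) = q - b := by simp [hk]; omega
  have hdvdp : (P k : ℤ) ∣ p := by
    have := ha k
    rw [hk1] at this
    have : ((p : ZMod (P k))) = 0 := by
      have hp : p = a + (p - a) := by ring
      calc (p : ZMod (P k)) = ((a : ℤ) : ZMod (P k)) + ((p - a : ℤ) : ZMod (P k)) := by
            rw [hp]; push_cast; ring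
        _ = 0 := by rw [this]; push_cast; ring
    exact (ZMod.intCast_zmod_eq_zero_iff_dvd p (P k)).1 this
  have hdvdq : (P k : ℤ) ∣ q := by
    have := hb k
    rw [hk2] at this
    have : ((q : ZMod (P k))) = 0 := by
      have hq : q = b + (q - b) := by ring
      calc (q : ZMod (P k)) = ((b : ℤ) : ZMod (P k)) + ((q - b : ℤ) : ZMod (P k)) := by
            rw [hq]; push_cast; ring
        _ = 0 := by rw [this]; push_cast; ring
    exact (ZMod.intCast_zmod_eq_zero_iff_dvd q (P k)).1 this
  have : (P k : ℤ) ∣ (Int.gcd p q : ℤ) := Int.dvd_coe_gcd hdvdp hdvdq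
  rw [hpq] at this
  have := Int.le_of_dvd one_pos this
  have := (hPprime k).two_le
  omega
end

section
/- Let v = (√2 - 1, √3 - 1) and let p ∈ ℤ², q ∈ ℤ² + v. Then the open line segment from p to q contains no point of ℤ² ∪ (ℤ² + v). -/
lemma sqrt6_irr : Irrational (Real.sqrt 6) := by
  rw [show (6:ℝ) = ((6:ℕ):ℝ) by norm_num]
  refine irrational_sqrt_natCast_iff.mpr ?_
  rintro ⟨r, hr⟩
  have : r ≤ 2 ∨ 3 ≤ r := by omega
  rcases this with h | h <;> nlinarith

lemma sqrt3_irr : Irrational (Real.sqrt 3) := (Nat.prime_three).irrational_sqrt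

lemma key_s12 (P Q k : ℤ) (h : (P:ℝ) * Real.sqrt 2 + (Q:ℝ) * Real.sqrt 3 = (k:ℝ)) :
    P = 0 ∧ Q = 0 := by
  have h6 : Real.sqrt 2 * Real.sqrt 3 = Real.sqrt 6 := by
    rw [← Real.sqrt_mul (by norm_num : (0:ℝ) ≤ 2)]; norm_num
  have h2 : Real.sqrt 2 ^ 2 = 2 := Real.sq_sqrt (by norm_num)
  have h3 : Real.sqrt 3 ^ 2 = 3 := Real.sq_sqrt (by norm_num)
  have hsq : ((2*P*Q : ℤ):ℝ) * Real.sqrt 6 = (((k^2 - 2*P^2 - 3*Q^2 : ℤ):ℚ):ℝ) := by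
    push_cast
    linear_combination ((P:ℝ)*Real.sqrt 2 + (Q:ℝ)*Real.sqrt 3 + (k:ℝ)) * h
      - (P:ℝ)^2 * h2 - (Q:ℝ)^2 * h3 - 2*(P:ℝ)*(Q:ℝ) * h6
  have hPQ : 2*P*Q = 0 := by
    by_contra hne
    exact (sqrt6_irr.intCast_mul hne) ⟨_, hsq.symm⟩
  have hPQ' : P = 0 ∨ Q = 0 := by
    rcases mul_eq_zero.mp hPQ with h' | h'
    · exact Or.inl (by omega)
    · exact Or.inr h'
  rcases hPQ' with hP | hQ
  · refine ⟨hP, ?_⟩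
    by_contra hQ
    refine (sqrt3_irr.intCast_mul hQ) ⟨(k:ℚ), ?_⟩
    rw [hP] at h; push_cast at h ⊢; linarith
  · refine ⟨?_, hQ⟩
    by_contra hP
    refine (irrational_sqrt_two.intCast_mul hP) ⟨(k:ℚ), ?_⟩
    rw [hQ] at h; push_cast at h ⊢; linarith

lemma case1 (a b c d m n : ℤ) (t : ℝ) (ht0 : 0 < t)
    (e1 : (1-t)*a + t*((c:ℝ) + Real.sqrt 2 - 1) = (m:ℝ))
    (e2 : (1-t)*b + t*((d:ℝ) + Real.sqrt 3 - 1) = (n:ℝ)) : False := by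
  have h1 : t * (((c-a-1:ℤ):ℝ) + Real.sqrt 2) = ((m-a:ℤ):ℝ) := by
    push_cast; linear_combination e1
  have h2 : t * (((d-b-1:ℤ):ℝ) + Real.sqrt 3) = ((n-b:ℤ):ℝ) := by
    push_cast; linear_combination e2
  have cross : ((m-a:ℤ):ℝ) * (((d-b-1:ℤ):ℝ) + Real.sqrt 3)
      = ((n-b:ℤ):ℝ) * (((c-a-1:ℤ):ℝ) + Real.sqrt 2) := by
    linear_combination (((c-a-1:ℤ):ℝ) + Real.sqrt 2) * h2 - (((d-b-1:ℤ):ℝ) + Real.sqrt 3) * h1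
  obtain ⟨hP, hQ⟩ := key_s12 (n-b) (-(m-a)) ((m-a)*(d-b-1) - (n-b)*(c-a-1)) (by
    push_cast; push_cast at cross; linear_combination -cross)
  have hM : (m - a : ℤ) = 0 := by omega
  rw [hM, Int.cast_zero] at h1
  have hne : ((c-a-1:ℤ):ℝ) + Real.sqrt 2 ≠ 0 := by
    intro hz
    exact (irrational_sqrt_two.ne_int (-(c-a-1))) (by push_cast; push_cast at hz; linarith)
  have : t = 0 := by
    rcases mul_eq_zero.mp h1 with h' | h'
    · exact h'
    · exact absurd h' hne
  linarith

lemma case2 (a b c d m n : ℤ) (t : ℝ) (ht1 : t < 1)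
    (e1 : (1-t)*a + t*((c:ℝ) + Real.sqrt 2 - 1) = (m:ℝ) + Real.sqrt 2 - 1)
    (e2 : (1-t)*b + t*((d:ℝ) + Real.sqrt 3 - 1) = (n:ℝ) + Real.sqrt 3 - 1) : False := by
  have h1 : t * (((c-a-1:ℤ):ℝ) + Real.sqrt 2) = ((m-a-1:ℤ):ℝ) + Real.sqrt 2 := by
    push_cast; linear_combination e1
  have h2 : t * (((d-b-1:ℤ):ℝ) + Real.sqrt 3) = ((n-b-1:ℤ):ℝ) + Real.sqrt 3 := by
    push_cast; linear_combination e2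
  have cross : (((m-a-1:ℤ):ℝ) + Real.sqrt 2) * (((d-b-1:ℤ):ℝ) + Real.sqrt 3)
      = (((n-b-1:ℤ):ℝ) + Real.sqrt 3) * (((c-a-1:ℤ):ℝ) + Real.sqrt 2) := by
    linear_combination (((c-a-1:ℤ):ℝ) + Real.sqrt 2) * h2 - (((d-b-1:ℤ):ℝ) + Real.sqrt 3) * h1
  obtain ⟨hP, hQ⟩ := key_s12 ((n-b-1) - (d-b-1)) ((c-a-1) - (m-a-1))
    ((m-a-1)*(d-b-1) - (n-b-1)*(c-a-1)) (by
      push_cast; push_cast at cross; linear_combination -cross)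
  have hM : (m - a - 1 : ℤ) = c - a - 1 := by omega
  rw [hM] at h1
  have hne : ((c-a-1:ℤ):ℝ) + Real.sqrt 2 ≠ 0 := by
    intro hz
    exact (irrational_sqrt_two.ne_int (-(c-a-1))) (by push_cast; push_cast at hz; linarith)
  have : t = 1 := by
    have : (t - 1) * (((c-a-1:ℤ):ℝ) + Real.sqrt 2) = 0 := by linear_combination h1
    rcases mul_eq_zero.mp this with h' | h'
    · linarith
    · exact absurd h' hne
  linarith



/-- Let `v = (√2-1, √3-1)`, `p ∈ ℤ²` and `q ∈ ℤ² + v`. Then the open segment from `p` to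
`q` contains no point of `ℤ² ∪ (ℤ² + v)`. -/
theorem segment_between_lattices_avoids_lattices
    (p q : EuclideanSpace ℝ (Fin 2))
    (hp : p ∈ {x : EuclideanSpace ℝ (Fin 2) | ∃ a b : ℤ, x = pt (a : ℝ) ((b : ℝ))})
    (hq : q ∈ {x : EuclideanSpace ℝ (Fin 2) |
      ∃ a b : ℤ, x = pt ((a : ℝ) + (Real.sqrt 2 - 1)) ((b : ℝ) + (Real.sqrt 3 - 1))}) :
    ∀ t : ℝ, 0 < t → t < 1 →
      (1 - t) • p + t • q ∉
        ({x : EuclideanSpace ℝ (Fin 2) | ∃ a b : ℤ, x = pt (a : ℝ) ((b : ℝ))}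
          ∪ {x | ∃ a b : ℤ, x = pt ((a : ℝ) + (Real.sqrt 2 - 1)) ((b : ℝ) + (Real.sqrt 3 - 1))}) := by
  intro t ht0 ht1 hmem
  obtain ⟨a, b, hpab⟩ := hp
  obtain ⟨c, d, hqcd⟩ := hq
  have comb : ∀ i : Fin 2, ((1 - t) • p + t • q) i = (1 - t) * p i + t * q i := by
    intro i; simp [PiLp.add_apply, PiLp.smul_apply, smul_eq_mul]
  have hp0 : p 0 = (a : ℝ) := by rw [hpab]; rfl
  have hp1 : p 1 = (b : ℝ) := by rw [hpab]; rfl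
  have hq0 : q 0 = (c : ℝ) + Real.sqrt 2 - 1 := by
    rw [hqcd]; show (c : ℝ) + (Real.sqrt 2 - 1) = _; ring
  have hq1 : q 1 = (d : ℝ) + Real.sqrt 3 - 1 := by
    rw [hqcd]; show (d : ℝ) + (Real.sqrt 3 - 1) = _; ring
  rcases hmem with ⟨m, n, hx⟩ | ⟨m, n, hx⟩
  · have e0 := congrArg (· 0) hx
    have e1 := congrArg (· 1) hx
    rw [comb 0, hp0, hq0] at e0
    rw [comb 1, hp1, hq1] at e1
    exact case1 a b c d m n t ht0 (by rw [e0]; rfl) (by rw [e1]; rfl)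
  · have e0 := congrArg (· 0) hx
    have e1 := congrArg (· 1) hx
    rw [comb 0, hp0, hq0] at e0
    rw [comb 1, hp1, hq1] at e1
    exact case2 a b c d m n t ht1
      (by rw [e0]; show (m : ℝ) + (Real.sqrt 2 - 1) = _; ring)
      (by rw [e1]; show (n : ℝ) + (Real.sqrt 3 - 1) = _; ring)
end

section
/- For any N ≥ 1 and R > 0, there exists (x,y) ∈ ℤ² such that every integer point (p,q) with ‖(p,q) - (x,y)‖ ≤ R satisfies gcd(p,q) > N. Consequently the complement in ℤ² of {gcd ≤ N} contains arbitrarily large 'gcd-deserts' (square blocks of side n for every n). -/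
lemma crt2 (u v a b : ℤ) (h : IsCoprime u v) : ∃ y, u ∣ y - a ∧ v ∣ y - b := by
  obtain ⟨s, t, hst⟩ := h
  exact ⟨a * (t * v) + b * (s * u), ⟨s * (b - a), by linear_combination a * hst⟩,
    ⟨t * (a - b), by linear_combination b * hst⟩⟩

lemma crt_finset {ι : Type*} (s : Finset ι) (m : ι → ℤ)
    (hm : Set.Pairwise (s : Set ι) (Function.onFun IsCoprime m)) (r : ι → ℤ) :
    ∃ x : ℤ, ∀ i ∈ s, m i ∣ x - r i := by
  classical
  induction s using Finset.induction with
  | empty => exact ⟨0, by simp⟩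
  | @insert a s' ha ih =>
    obtain ⟨x, hx⟩ := ih (hm.mono (by simp [Finset.subset_insert]))
    have hcop : IsCoprime (m a) (∏ i ∈ s', m i) := by
      apply IsCoprime.prod_right
      intro i hi
      exact hm (by simp) (by simp [hi]) (by rintro rfl; exact ha hi)
    obtain ⟨y, hy1, hy2⟩ := crt2 (m a) (∏ i ∈ s', m i) (r a) x hcop
    refine ⟨y, ?_⟩
    intro i hi
    rcases Finset.mem_insert.mp hi with rfl | hi
    · exact hy1
    · have h1 : m i ∣ y - x := (Finset.dvd_prod_of_mem m hi).trans hy2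
      have h2 := hx i hi
      have : y - r i = (y - x) + (x - r i) := by ring
      rw [this]; exact dvd_add h1 h2

lemma gcd_block (N : ℕ) (n : ℤ) (hn : 0 < n) :
    ∃ x y : ℤ, ∀ i j : ℤ, 1 ≤ i → i ≤ n → 1 ≤ j → j ≤ n →
      N < Int.gcd (x + i) (y + j) := by
  classical
  set S : Finset (ℤ × ℤ) := Finset.Icc 1 n ×ˢ Finset.Icc 1 n with hS
  set enc : ℤ × ℤ → ℕ := fun p => (p.1 - 1).toNat * n.toNat + (p.2 - 1).toNat with henc
  have hencInj : ∀ p ∈ S, ∀ q ∈ S, enc p = enc q → p = q := by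
    rintro ⟨a, b⟩ hp ⟨c, d⟩ hq h
    simp only [hS, Finset.mem_product, Finset.mem_Icc] at hp hq
    have hb : (b - 1).toNat < n.toNat := by omega
    have hd : (d - 1).toNat < n.toNat := by omega
    simp only [henc] at h
    have h1 : (b - 1).toNat = (d - 1).toNat := by
      have h' : n.toNat * (a - 1).toNat + (b - 1).toNat
          = n.toNat * (c - 1).toNat + (d - 1).toNat := by
        simpa [Nat.mul_comm] using h
      have e1 := Nat.mul_add_mod n.toNat (a - 1).toNat (b - 1).toNat
      have e2 := Nat.mul_add_mod n.toNat (c - 1).toNat (d - 1).toNat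
      rw [Nat.mod_eq_of_lt hb] at e1
      rw [Nat.mod_eq_of_lt hd] at e2
      rw [← e1, h', e2]
    have h2 : (a - 1).toNat = (c - 1).toNat := by
      have hn' : 0 < n.toNat := by omega
      refine Nat.eq_of_mul_eq_mul_right hn' ?_
      omega
    have : a = c ∧ b = d := by constructor <;> omega
    simp [this.1, this.2]
  have hmono : StrictMono (Nat.nth Nat.Prime) :=
    Nat.nth_strictMono Nat.infinite_setOf_prime
  set f : ℤ × ℤ → ℕ := fun p => Nat.nth Nat.Prime (enc p + N + 1) with hf
  have hfprime : ∀ p, Nat.Prime (f p) := fun p => Nat.prime_nth_prime _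
  have hfgt : ∀ p, N < f p := by
    intro p
    calc N < enc p + N + 1 := by omega
    _ ≤ Nat.nth Nat.Prime (enc p + N + 1) := hmono.le_apply
  have hpair : Set.Pairwise (S : Set (ℤ × ℤ)) (Function.onFun IsCoprime fun p => (f p : ℤ)) := by
    intro p hp q hq hne
    have hfne : f p ≠ f q := by
      intro h
      have := hmono.injective h
      exact hne (hencInj p (by simpa using hp) q (by simpa using hq) (by omega))
    simp only [Function.onFun]
    exact Nat.isCoprime_iff_coprime.mpr ((Nat.coprime_primes (hfprime p) (hfprime q)).mpr hfne)
  obtain ⟨x, hx⟩ := crt_finset S (fun p => (f p : ℤ)) hpair (fun p => -p.1)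
  obtain ⟨y, hy⟩ := crt_finset S (fun p => (f p : ℤ)) hpair (fun p => -p.2)
  set P : ℤ := ∏ p ∈ S, (f p : ℤ) with hP
  have hP1 : 1 ≤ P := by
    have : (0 : ℤ) < P := Finset.prod_pos (fun p _ => by exact_mod_cast (hfprime p).pos)
    omega
  set x' : ℤ := x + P * (|x| + n) with hx'
  refine ⟨x', y, ?_⟩
  intro i j hi1 hin hj1 hjn
  have hmem : (i, j) ∈ S := by simp [hS, Finset.mem_Icc]; omega
  have hdx : (f (i, j) : ℤ) ∣ x' + i := by
    have h1 : (f (i, j) : ℤ) ∣ x - (-i) := hx _ hmem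
    have h2 : (f (i, j) : ℤ) ∣ P := Finset.dvd_prod_of_mem _ hmem
    have : x' + i = (x - (-i)) + P * (|x| + n) := by rw [hx']; ring
    rw [this]; exact dvd_add h1 (h2.mul_right _)
  have hdy : (f (i, j) : ℤ) ∣ y + j := by
    have h1 : (f (i, j) : ℤ) ∣ y - (-j) := hy _ hmem
    simpa using h1
  have hxpos : 0 < x' + i := by
    have : |x| + n ≤ P * (|x| + n) := le_mul_of_one_le_left (by positivity) hP1
    have hax : -x ≤ |x| := neg_le_abs x
    simp only [hx']
    omega
  have hdg : (f (i, j) : ℤ) ∣ (Int.gcd (x' + i) (y + j) : ℤ) :=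
    Int.natCast_dvd_natCast.mpr (Int.dvd_gcd hdx hdy)
  have hg0 : Int.gcd (x' + i) (y + j) ≠ 0 := by
    simp only [ne_eq, Int.gcd_eq_zero_iff]
    rintro ⟨h, -⟩; omega
  have hle : f (i, j) ≤ Int.gcd (x' + i) (y + j) :=
    Nat.le_of_dvd (Nat.pos_of_ne_zero hg0) (Int.natCast_dvd_natCast.mp hdg)
  exact lt_of_lt_of_le (hfgt _) hle

lemma abs_le_of_dist (a b c d : ℝ) (R : ℝ) (h : dist (pt a b) (pt c d) ≤ R) :
    |a - c| ≤ R ∧ |b - d| ≤ R := by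
  rw [pt_dist] at h
  constructor
  · calc |a - c| = Real.sqrt ((a - c) ^ 2) := (Real.sqrt_sq_eq_abs _).symm
      _ ≤ Real.sqrt ((a - c) ^ 2 + (b - d) ^ 2) := Real.sqrt_le_sqrt (le_add_of_nonneg_right (sq_nonneg _))
      _ ≤ R := h
  · calc |b - d| = Real.sqrt ((b - d) ^ 2) := (Real.sqrt_sq_eq_abs _).symm
      _ ≤ Real.sqrt ((a - c) ^ 2 + (b - d) ^ 2) := Real.sqrt_le_sqrt (le_add_of_nonneg_left (sq_nonneg _))
      _ ≤ R := h

/-- For any `N ≥ 1` and `R > 0` there is `(x,y) ∈ ℤ²` such that every integer point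
`(p,q)` within distance `R` of `(x,y)` has `gcd(p,q) > N`; consequently, for every `n`
there is a square block of side `n` all of whose points have gcd exceeding `N`. -/
theorem exists_gcd_desert_ball (N : ℕ) (hN : 1 ≤ N) :
    (∀ R : ℝ, 0 < R → ∃ x y : ℤ, ∀ p q : ℤ,
        dist (pt (p : ℝ) ((q : ℝ)) : EuclideanSpace ℝ (Fin 2)) (pt (x : ℝ) ((y : ℝ))) ≤ R →
        N < Int.gcd p q) ∧
    (∀ n : ℤ, 0 < n → ∃ x y : ℤ, ∀ i j : ℤ, 1 ≤ i → i ≤ n → 1 ≤ j → j ≤ n →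
        N < Int.gcd (x + i) (y + j)) := by
  constructor
  · intro R hR
    set m : ℤ := ⌈R⌉ with hm
    have hm1 : 1 ≤ m := by
      rw [hm]
      exact_mod_cast Int.le_ceil_iff.mpr (by push_cast; linarith)
    obtain ⟨x, y, hxy⟩ := gcd_block N (2 * m + 1) (by omega)
    refine ⟨x + m + 1, y + m + 1, ?_⟩
    intro p q hd
    obtain ⟨h1, h2⟩ := abs_le_of_dist _ _ _ _ R hd
    have hp : |p - (x + m + 1)| ≤ m := by
      have : (|p - (x + m + 1)| : ℝ) ≤ (m : ℝ) := by
        push_cast [← Int.cast_abs]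
        calc (|((p : ℝ)) - ((x : ℝ) + (m : ℝ) + 1)| : ℝ) ≤ R := by
              convert h1 using 2; push_cast; ring
          _ ≤ (m : ℝ) := Int.le_ceil R
        done
      exact_mod_cast this
    have hq : |q - (y + m + 1)| ≤ m := by
      have : (|q - (y + m + 1)| : ℝ) ≤ (m : ℝ) := by
        push_cast [← Int.cast_abs]
        calc (|((q : ℝ)) - ((y : ℝ) + (m : ℝ) + 1)| : ℝ) ≤ R := by
              convert h2 using 2; push_cast; ring
          _ ≤ (m : ℝ) := Int.le_ceil R
      exact_mod_cast this
    rw [abs_le] at hp hq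
    have := hxy (p - x) (q - y) (by omega) (by omega) (by omega) (by omega)
    have e1 : x + (p - x) = p := by ring
    have e2 : y + (q - y) = q := by ring
    rwa [e1, e2] at this
  · intro n hn
    exact gcd_block N n hn
end
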